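/- arXiv:2303.17940 — 2 statements merged into one kernel-verified Lean document; each statement's English description precedes it below -/
import Mathlib

section
/- For every real number A > 0, (exp(1 - A)/(1 + exp(1 - A))) · (√A + 1)² ≤ 2. -/
/-- For every real A > 0, (exp(1-A)/(1+exp(1-A))) · (√A + 1)² ≤ 2. -/
theorem logistic_sqrt_bound (A : ℝ) (hA : 0 < A) :
    Real.exp (1 - A) / (1 + Real.exp (1 - A)) * (Real.sqrt A + 1) ^ 2 ≤ 2 := by
  have hE : 0 < Real.exp (1 - A) := Real.exp_pos _
  have hden : 0 < 1 + Real.exp (1 - A) := by linarith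
  have ht : Real.sqrt A ^ 2 = A := Real.sq_sqrt hA.le
  have hs : 0 ≤ Real.sqrt A := Real.sqrt_nonneg A
  -- A * exp(1-A) ≤ 1
  have h1 : A ≤ Real.exp (A - 1) := by
    have := Real.add_one_le_exp (A - 1); linarith
  have h2 : A * Real.exp (1 - A) ≤ 1 := by
    have hmul : A * Real.exp (1 - A) ≤ Real.exp (A - 1) * Real.exp (1 - A) :=
      mul_le_mul_of_nonneg_right h1 hE.le
    rwa [← Real.exp_add, show A - 1 + (1 - A) = 0 by ring, Real.exp_zero] at hmul
  rw [div_mul_eq_mul_div, div_le_iff₀ hden]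
  nlinarith [mul_nonneg hE.le (sq_nonneg (Real.sqrt A - 1)), sq_nonneg (Real.sqrt A - 1)]
end

section
/- Suppose L = (1/n)·∑ᵢ ℓ(fᵢ) where ℓ is the logistic loss and f₁,…,f_n are differentiable functions of a parameter W in a real inner product space. If for each i the gradient satisfies ‖∇fᵢ(W)‖ ≤ M and additionally (−ℓ'(fᵢ(W)))·‖∇fᵢ(W)‖² ≤ C for all i, then ‖∇L(W)‖² ≤ (C/n)·∑ᵢ(−ℓ'(fᵢ(W))) ≤ C·L(W). -/
open Real Finset

lemma logistic_hasDerivAt (z : ℝ) :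
    HasDerivAt (fun z => Real.log (1 + Real.exp (-z))) (-1 / (1 + Real.exp z)) z := by
  have h1 : HasDerivAt (fun z : ℝ => 1 + Real.exp (-z)) (-Real.exp (-z)) z := by
    have := ((Real.hasDerivAt_exp (-z)).comp z (hasDerivAt_neg z)).const_add 1
    simpa using this
  have hpos : (0:ℝ) < 1 + Real.exp (-z) := by positivity
  have := h1.log (ne_of_gt hpos)
  convert this using 1
  rw [Real.exp_neg]
  have he : Real.exp z ≠ 0 := (Real.exp_pos z).ne'
  field_simp
  ring

lemma inv_one_add_exp_le_log (z : ℝ) :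
    1 / (1 + Real.exp z) ≤ Real.log (1 + Real.exp (-z)) := by
  set t := Real.exp (-z) with ht
  have htpos : 0 < t := Real.exp_pos _
  have hpos : (0:ℝ) < 1 + t := by positivity
  have h1 : Real.log (1 + t)⁻¹ ≤ (1 + t)⁻¹ - 1 :=
    Real.log_le_sub_one_of_pos (by positivity)
  rw [Real.log_inv] at h1
  have h2 : 1 - (1 + t)⁻¹ ≤ Real.log (1 + t) := by linarith
  have heq : 1 / (1 + Real.exp z) = 1 - (1 + t)⁻¹ := by
    have he : Real.exp z ≠ 0 := (Real.exp_pos z).ne'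
    have : t = (Real.exp z)⁻¹ := by rw [ht, Real.exp_neg]
    rw [this]
    field_simp
    ring
  rw [heq]; exact h2

/-- Gradient-norm bound for the averaged logistic loss: if L(W) = (1/n)·∑ᵢ ℓ(fᵢ(W)) with
ℓ(z) = log(1 + e^{-z}), ℓ'(z) = -1/(1 + e^z), and for each i the per-example gradients
satisfy ‖∇fᵢ(W)‖ ≤ M and (−ℓ'(fᵢ(W)))·‖∇fᵢ(W)‖² ≤ C, then
‖∇L(W)‖² ≤ (C/n)·∑ᵢ(−ℓ'(fᵢ(W))) ≤ C·L(W). -/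
theorem grad_norm_sq_le_loss {V : Type*} [NormedAddCommGroup V] [InnerProductSpace ℝ V]
    [CompleteSpace V] (n : ℕ) (hn : 0 < n) (f : Fin n → V → ℝ)
    (hf : ∀ i, Differentiable ℝ (f i)) (W : V) (M C : ℝ) (hC : 0 ≤ C)
    (hM : ∀ i, ‖gradient (f i) W‖ ≤ M)
    (hCb : ∀ i, (-(-1 / (1 + Real.exp (f i W)))) * ‖gradient (f i) W‖ ^ 2 ≤ C) :
    ‖gradient (fun W' => (n : ℝ)⁻¹ * ∑ i, Real.log (1 + Real.exp (-(f i W')))) W‖ ^ 2 ≤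
        (C / n) * ∑ i, (-(-1 / (1 + Real.exp (f i W)))) ∧
      (C / n) * ∑ i, (-(-1 / (1 + Real.exp (f i W)))) ≤
        C * ((n : ℝ)⁻¹ * ∑ i, Real.log (1 + Real.exp (-(f i W)))) := by
  -- notation
  set s : Fin n → ℝ := fun i => 1 / (1 + Real.exp (f i W)) with hs
  have hsnn : ∀ i, 0 ≤ s i := fun i => by positivity
  have hsimp : ∀ i, (-(-1 / (1 + Real.exp (f i W)))) = s i := fun i => by
    rw [hs]; ring
  -- the gradient of each summand
  have hsum : HasFDerivAt (fun W' => (n : ℝ)⁻¹ * ∑ i, Real.log (1 + Real.exp (-(f i W'))))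
      ((n : ℝ)⁻¹ • ∑ i, (-(s i)) • fderiv ℝ (f i) W) W := by
    refine HasFDerivAt.const_mul ?_ _
    refine HasFDerivAt.fun_sum fun i _ => ?_
    have h := (logistic_hasDerivAt (f i W)).comp_hasFDerivAt W ((hf i).differentiableAt).hasFDerivAt
    convert h using 2
    · rfl
    · rfl
    rw [hs]; ring
  -- rewrite gradient norm as fderiv norm
  have hgradL : ‖gradient (fun W' => (n : ℝ)⁻¹ *
      ∑ i, Real.log (1 + Real.exp (-(f i W')))) W‖ =
      ‖(n : ℝ)⁻¹ • ∑ i, (-(s i)) • fderiv ℝ (f i) W‖ := by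
    rw [gradient, hsum.fderiv]
    exact (InnerProductSpace.toDual ℝ V).symm.norm_map _
  have hgradf : ∀ i, ‖gradient (f i) W‖ = ‖fderiv ℝ (f i) W‖ := fun i => by
    rw [gradient]
    exact (InnerProductSpace.toDual ℝ V).symm.norm_map _
  set g : Fin n → ℝ := fun i => ‖fderiv ℝ (f i) W‖ with hg
  have hgnn : ∀ i, 0 ≤ g i := fun i => norm_nonneg _
  have hCb' : ∀ i, s i * g i ^ 2 ≤ C := fun i => by
    have := hCb i; rw [hsimp i, hgradf i] at this; exact this
  have hnpos : (0:ℝ) < n := Nat.cast_pos.mpr hn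
  -- triangle inequality bound
  have h1 : ‖(n : ℝ)⁻¹ • ∑ i, (-(s i)) • fderiv ℝ (f i) W‖ ≤
      (n : ℝ)⁻¹ * ∑ i, s i * g i := by
    rw [norm_smul]
    have : ‖∑ i, (-(s i)) • fderiv ℝ (f i) W‖ ≤ ∑ i, s i * g i := by
      refine (norm_sum_le _ _).trans ?_
      refine Finset.sum_le_sum fun i _ => ?_
      rw [norm_smul, Real.norm_eq_abs, abs_neg, abs_of_nonneg (hsnn i)]
    calc ‖(n:ℝ)⁻¹‖ * ‖∑ i, (-(s i)) • fderiv ℝ (f i) W‖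
        ≤ ‖(n:ℝ)⁻¹‖ * ∑ i, s i * g i := by
          exact mul_le_mul_of_nonneg_left this (norm_nonneg _)
      _ = (n : ℝ)⁻¹ * ∑ i, s i * g i := by
          rw [Real.norm_eq_abs, abs_of_nonneg (by positivity)]
  -- per-term bound: s i * g i ≤ √(s i) * √C
  have h2 : ∀ i, s i * g i ≤ Real.sqrt (s i) * Real.sqrt C := fun i => by
    have key : (s i * g i) = Real.sqrt (s i * (s i * g i ^ 2)) := by
      rw [show s i * (s i * g i ^ 2) = (s i * g i) ^ 2 by ring,
        Real.sqrt_sq (by positivity)]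
    rw [key, ← Real.sqrt_mul (hsnn i)]
    exact Real.sqrt_le_sqrt (mul_le_mul_of_nonneg_left (hCb' i) (hsnn i))
  constructor
  · -- main bound
    have h3 : ‖gradient (fun W' => (n : ℝ)⁻¹ *
        ∑ i, Real.log (1 + Real.exp (-(f i W')))) W‖ ≤
        (n : ℝ)⁻¹ * (Real.sqrt C * ∑ i, Real.sqrt (s i)) := by
      rw [hgradL]
      refine h1.trans ?_
      refine mul_le_mul_of_nonneg_left ?_ (by positivity)
      rw [Finset.mul_sum]
      exact Finset.sum_le_sum fun i _ => (h2 i).trans_eq (mul_comm _ _)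
    have hCS : (∑ i, Real.sqrt (s i)) ^ 2 ≤ n * ∑ i, s i := by
      have := sq_sum_le_card_mul_sum_sq (s := Finset.univ) (f := fun i => Real.sqrt (s i))
      simpa [Real.sq_sqrt (hsnn _)] using this
    have hnorm_nn : (0:ℝ) ≤ ‖gradient (fun W' => (n : ℝ)⁻¹ *
        ∑ i, Real.log (1 + Real.exp (-(f i W')))) W‖ := norm_nonneg _
    have hrhs_nn : (0:ℝ) ≤ (n : ℝ)⁻¹ * (Real.sqrt C * ∑ i, Real.sqrt (s i)) := by
      have : 0 ≤ ∑ i, Real.sqrt (s i) := Finset.sum_nonneg fun i _ => Real.sqrt_nonneg _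
      positivity
    calc ‖gradient (fun W' => (n : ℝ)⁻¹ *
          ∑ i, Real.log (1 + Real.exp (-(f i W')))) W‖ ^ 2
        ≤ ((n : ℝ)⁻¹ * (Real.sqrt C * ∑ i, Real.sqrt (s i))) ^ 2 :=
          pow_le_pow_left₀ hnorm_nn h3 2
      _ = (n : ℝ)⁻¹ ^ 2 * (Real.sqrt C ^ 2 * (∑ i, Real.sqrt (s i)) ^ 2) := by ring
      _ ≤ (n : ℝ)⁻¹ ^ 2 * (C * (n * ∑ i, s i)) := by
          refine mul_le_mul_of_nonneg_left ?_ (by positivity)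
          rw [Real.sq_sqrt hC]
          exact mul_le_mul_of_nonneg_left hCS hC
      _ = (C / n) * ∑ i, s i := by
          field_simp
      _ = (C / n) * ∑ i, (-(-1 / (1 + Real.exp (f i W)))) := by
          simp_rw [hsimp]
  · -- second inequality
    have h4 : ∑ i, s i ≤ ∑ i, Real.log (1 + Real.exp (-(f i W))) :=
      Finset.sum_le_sum fun i _ => inv_one_add_exp_le_log (f i W)
    have : (C / n) * ∑ i, s i ≤ (C / n) * ∑ i, Real.log (1 + Real.exp (-(f i W))) :=
      mul_le_mul_of_nonneg_left h4 (by positivity)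
    calc (C / n) * ∑ i, (-(-1 / (1 + Real.exp (f i W))))
        = (C / n) * ∑ i, s i := by simp_rw [hsimp]
      _ ≤ (C / n) * ∑ i, Real.log (1 + Real.exp (-(f i W))) := this
      _ = C * ((n : ℝ)⁻¹ * ∑ i, Real.log (1 + Real.exp (-(f i W)))) := by ring
end
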